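/- arXiv:1804.10155 — 5 statements merged into one kernel-verified Lean document; each statement's English description precedes it below -/
import Mathlib

section
/- Let w:[0,1]→(0,∞) be continuous, let a₀, a₁ ∈ ℝᵈ be unit vectors with ⟨a₀, a₁⟩ > −1, and set ω = arccos⟨a₀, a₁⟩ and c = ∫₀¹ w(t)⁻¹ dt. Then the infimum of ∫₀¹ |α'(t)|² w(t) dt over all C¹ curves α:[0,1]→ℝᵈ with |α(t)| = 1 for all t, α(0) = a₀ and α(1) = a₁, equals ω²/c, and it is attained by α = α̃∘λ, where α̃(t) = (sin((1−t)ω)/sin ω)·a₀ + (sin(tω)/sin ω)·a₁ (interpreted as the constant curve a₀ when ω = 0) and λ(t) = (1/c)∫₀ᵗ w(r)⁻¹ dr. -/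
/-!
Along a curve `α` on the unit sphere, `t ↦ arccos ⟪a₀, α t⟫` moves no faster than `‖α'‖`, because
`α'` is orthogonal to `α` and the component of `a₀` orthogonal to `α t` has length
`√(1 - ⟪a₀, α t⟫²)`. Hence the length of `α` is at least `ω`, and the weighted Cauchy–Schwarz
inequality `(∫ ‖α'‖)² ≤ (∫ ‖α'‖² w) (∫ w⁻¹)` gives the lower bound `ω² / c`. The great-circle arc
has constant speed `ω`; reparametrised by `λ`, whose derivative is `w⁻¹ / c`, it has
`‖α'‖² w = ω² w⁻¹ / c²`, which integrates to `ω² / c`.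
-/

open MeasureTheory Set Filter Topology
open scoped RealInnerProductSpace

theorem Real.arccos_sub_arccos_le_integral {g g' m : ℝ → ℝ} {a b : ℝ} (hab : a ≤ b)
    (hg : ContinuousOn g (Icc a b)) (hg' : ∀ t ∈ Ioo a b, HasDerivAt g (g' t) t)
    (hg1 : ∀ t ∈ Icc a b, |g t| ≤ 1) (hm : IntegrableOn m (Icc a b))
    (hm0 : ∀ t ∈ Ioo a b, 0 ≤ m t) (hbound : ∀ t ∈ Ioo a b, -g' t ≤ √(1 - g t ^ 2) * m t) :
    Real.arccos (g b) - Real.arccos (g a) ≤ ∫ t in a..b, m t := by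
  -- `arccos` is not differentiable at `±1`, so we first shrink `g` by a factor `s < 1`.
  have hshrunk : ∀ s ∈ Ioo (0 : ℝ) 1,
      Real.arccos (s * g b) - Real.arccos (s * g a) ≤ ∫ t in a..b, m t := by
    rintro s ⟨hs0, hs1⟩
    have hsg : ∀ t ∈ Icc a b, |s * g t| < 1 := fun t ht => by
      rw [abs_mul, abs_of_pos hs0]
      nlinarith [hg1 t ht, abs_nonneg (g t)]
    refine intervalIntegral.sub_le_integral_of_hasDeriv_right_of_le hab
      (g' := fun t => -(1 / √(1 - (s * g t) ^ 2)) * (s * g' t))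
      (Real.continuous_arccos.comp_continuousOn (continuousOn_const.mul hg)) (fun t ht => ?_) hm
      (fun t ht => ?_)
    · have hlt := abs_lt.1 (hsg t (Ioo_subset_Icc_self ht))
      exact ((Real.hasDerivAt_arccos (by linarith [hlt.1]) (by linarith [hlt.2])).comp t
        ((hg' t ht).const_mul s)).hasDerivWithinAt
    · have hroot : s * √(1 - g t ^ 2) ≤ √(1 - (s * g t) ^ 2) :=
        calc s * √(1 - g t ^ 2) = √(s ^ 2 * (1 - g t ^ 2)) := by
              rw [Real.sqrt_mul (sq_nonneg s), Real.sqrt_sq hs0.le]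
          _ ≤ _ := Real.sqrt_le_sqrt (by nlinarith [sq_nonneg (g t)])
      have hpos : 0 < √(1 - (s * g t) ^ 2) := Real.sqrt_pos.2 <| sub_pos.2 <|
        (sq_lt_one_iff_abs_lt_one _).2 (hsg t (Ioo_subset_Icc_self ht))
      rw [neg_mul, one_div_mul_eq_div, ← neg_div, div_le_iff₀ hpos, ← mul_neg]
      calc s * -g' t ≤ s * (√(1 - g t ^ 2) * m t) := by gcongr; exact hbound t ht
        _ = (s * √(1 - g t ^ 2)) * m t := by ring
        _ ≤ _ := by rw [mul_comm (m t)]; gcongr; exact hm0 t ht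
  have hlim : Tendsto (fun s => Real.arccos (s * g b) - Real.arccos (s * g a)) (𝓝[<] 1)
      (𝓝 (Real.arccos (g b) - Real.arccos (g a))) := by
    have : Continuous fun s => Real.arccos (s * g b) - Real.arccos (s * g a) := by fun_prop
    simpa using (this.tendsto 1).mono_left nhdsWithin_le_nhds
  exact le_of_tendsto hlim (eventually_of_mem (Ioo_mem_nhdsLT zero_lt_one) hshrunk)

theorem sq_integral_le_integral_sq_mul_mul_integral_inv {m w : ℝ → ℝ} {a b : ℝ} (hab : a ≤ b)
    (hw : ∀ t ∈ Icc a b, 0 < w t) (hmw : IntervalIntegrable (fun t => m t ^ 2 * w t) volume a b)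
    (hm : IntervalIntegrable m volume a b)
    (hwinv : IntervalIntegrable (fun t => (w t)⁻¹) volume a b) :
    (∫ t in a..b, m t) ^ 2 ≤ (∫ t in a..b, m t ^ 2 * w t) * ∫ t in a..b, (w t)⁻¹ := by
  have hquad : ∀ K : ℝ, 0 ≤ (∫ t in a..b, (w t)⁻¹) * (K * K) + (-2 * ∫ t in a..b, m t) * K
      + ∫ t in a..b, m t ^ 2 * w t := fun K => by
    have hsq : 0 ≤ ∫ t in a..b, (w t)⁻¹ * (w t * m t - K) ^ 2 :=
      intervalIntegral.integral_nonneg hab fun t ht => mul_nonneg (inv_pos.2 (hw t ht)).le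
        (sq_nonneg _)
    have hexpand : EqOn (fun t => (w t)⁻¹ * (w t * m t - K) ^ 2)
        (fun t => K * K * (w t)⁻¹ + -2 * K * m t + m t ^ 2 * w t) (uIcc a b) := fun t ht => by
      rw [uIcc_of_le hab] at ht
      field_simp [(hw t ht).ne']
      ring
    rw [intervalIntegral.integral_congr hexpand, intervalIntegral.integral_add
      ((hwinv.const_mul _).add (hm.const_mul _)) hmw, intervalIntegral.integral_add
      (hwinv.const_mul _) (hm.const_mul _), intervalIntegral.integral_const_mul,
      intervalIntegral.integral_const_mul] at hsq
    linarith
  have hdisc := discrim_le_zero hquad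
  rw [discrim] at hdisc
  linarith

section InnerProductSpace

variable {E : Type*} [NormedAddCommGroup E] [InnerProductSpace ℝ E]

theorem inner_eq_zero_of_hasDerivAt_of_norm_eventually_eq {α : ℝ → E} {v : E} {t r : ℝ}
    (hα : HasDerivAt α v t) (hnorm : ∀ᶠ u in 𝓝 t, ‖α u‖ = r) : ⟪α t, v⟫ = 0 := by
  have hconst : HasDerivAt (fun u => ‖α u‖ ^ 2) 0 t :=
    (hasDerivAt_const t (r ^ 2)).congr_of_eventuallyEq (hnorm.mono fun u hu => by simp only [hu])
  simpa using hα.norm_sq.unique hconst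

theorem abs_inner_le_sqrt_one_sub_inner_sq_mul_norm {a x v : E} (ha : ‖a‖ = 1) (hx : ‖x‖ = 1)
    (hxv : ⟪x, v⟫ = 0) : |⟪a, v⟫| ≤ √(1 - ⟪a, x⟫ ^ 2) * ‖v‖ := by
  have hproj : ⟪a, v⟫ = ⟪a - ⟪a, x⟫ • x, v⟫ := by
    rw [inner_sub_left, real_inner_smul_left, hxv, mul_zero, sub_zero]
  have hnorm : ‖a - ⟪a, x⟫ • x‖ = √(1 - ⟪a, x⟫ ^ 2) := by
    rw [← Real.sqrt_sq (norm_nonneg _), norm_sub_sq_real, norm_smul, real_inner_smul_right,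
      Real.norm_eq_abs, mul_pow, sq_abs, ha, hx]
    ring_nf
  rw [hproj, ← hnorm]
  exact abs_real_inner_le_norm _ _

theorem arccos_inner_le_integral_norm_deriv {α α' : ℝ → E} {a b : ℝ} (hab : a ≤ b)
    (hα : ContinuousOn α (Icc a b)) (hα' : ∀ t ∈ Ioo a b, HasDerivAt α (α' t) t)
    (hint : IntegrableOn (fun t => ‖α' t‖) (Icc a b)) (hnorm : ∀ t ∈ Icc a b, ‖α t‖ = 1) :
    Real.arccos ⟪α a, α b⟫ ≤ ∫ t in a..b, ‖α' t‖ := by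
  have ha := hnorm a (left_mem_Icc.2 hab)
  have key := Real.arccos_sub_arccos_le_integral (g := fun t => ⟪α a, α t⟫) hab
    (continuousOn_const.inner hα) (fun t ht => (hasDerivAt_const t (α a)).inner ℝ (hα' t ht))
    (fun t ht => by simpa [ha, hnorm t ht] using abs_real_inner_le_norm (α a) (α t)) hint
    (fun t _ => norm_nonneg _) (fun t ht => ?_)
  · rwa [real_inner_self_eq_norm_sq, ha, one_pow, Real.arccos_one, sub_zero] at key
  · have horth := inner_eq_zero_of_hasDerivAt_of_norm_eventually_eq (hα' t ht)
      (eventually_of_mem (Icc_mem_nhds ht.1 ht.2) hnorm)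
    simp only [inner_zero_left, add_zero]
    exact neg_le_abs _ |>.trans (abs_inner_le_sqrt_one_sub_inner_sq_mul_norm ha
      (hnorm t (Ioo_subset_Icc_self ht)) horth)

theorem sq_arccos_inner_le_energy_mul_integral_inv {α α' : ℝ → E} {w : ℝ → ℝ} {a b : ℝ}
    (hab : a ≤ b) (hw : ContinuousOn w (Icc a b)) (hwpos : ∀ t ∈ Icc a b, 0 < w t)
    (hα : ∀ t ∈ Icc a b, HasDerivWithinAt α (α' t) (Icc a b) t) (hα' : ContinuousOn α' (Icc a b))
    (hnorm : ∀ t ∈ Icc a b, ‖α t‖ = 1) :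
    Real.arccos ⟪α a, α b⟫ ^ 2 ≤ (∫ t in a..b, ‖α' t‖ ^ 2 * w t) * ∫ t in a..b, (w t)⁻¹ := by
  have hlength := arccos_inner_le_integral_norm_deriv hab
    (fun t ht => (hα t ht).continuousWithinAt)
    (fun t ht => (hα t (Ioo_subset_Icc_self ht)).hasDerivAt (Icc_mem_nhds ht.1 ht.2))
    (hα'.norm.integrableOn_compact isCompact_Icc) hnorm
  calc Real.arccos ⟪α a, α b⟫ ^ 2 ≤ (∫ t in a..b, ‖α' t‖) ^ 2 :=
        pow_le_pow_left₀ (Real.arccos_nonneg _) hlength 2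
    _ ≤ _ := sq_integral_le_integral_sq_mul_mul_integral_inv hab hwpos
      (((hα'.norm.pow 2).mul hw).intervalIntegrable_of_Icc hab)
      (hα'.norm.intervalIntegrable_of_Icc hab)
      ((hw.inv₀ fun t ht => (hwpos t ht).ne').intervalIntegrable_of_Icc hab)


noncomputable def greatCircleArc (a₀ a₁ : E) (ω t : ℝ) : E :=
  (Real.sin ((1 - t) * ω) / Real.sin ω) • a₀ + (Real.sin (t * ω) / Real.sin ω) • a₁

variable {a₀ a₁ : E} {ω : ℝ}

theorem norm_smul_add_smul_sq (ha₀ : ‖a₀‖ = 1) (ha₁ : ‖a₁‖ = 1) (p q : ℝ) :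
    ‖p • a₀ + q • a₁‖ ^ 2 = p ^ 2 + 2 * p * q * ⟪a₀, a₁⟫ + q ^ 2 := by
  rw [norm_add_sq_real, norm_smul, norm_smul, real_inner_smul_left, real_inner_smul_right,
    ha₀, ha₁, Real.norm_eq_abs, Real.norm_eq_abs, mul_one, mul_one, sq_abs, sq_abs]
  ring

theorem greatCircleArc_zero (hsin : Real.sin ω ≠ 0) : greatCircleArc a₀ a₁ ω 0 = a₀ := by
  simp [greatCircleArc, hsin]

theorem greatCircleArc_one (hsin : Real.sin ω ≠ 0) : greatCircleArc a₀ a₁ ω 1 = a₁ := by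
  simp [greatCircleArc, hsin]

theorem norm_greatCircleArc (ha₀ : ‖a₀‖ = 1) (ha₁ : ‖a₁‖ = 1) (hcos : ⟪a₀, a₁⟫ = Real.cos ω)
    (hsin : Real.sin ω ≠ 0) (t : ℝ) : ‖greatCircleArc a₀ a₁ ω t‖ = 1 := by
  have htrig : ∀ x y : ℝ, Real.sin x ^ 2 + 2 * Real.sin x * Real.sin y * Real.cos (x + y)
      + Real.sin y ^ 2 = Real.sin (x + y) ^ 2 := fun x y => by
    rw [Real.sin_add, Real.cos_add]
    nlinarith [Real.sin_sq_add_cos_sq x, Real.sin_sq_add_cos_sq y]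
  have hω : (1 - t) * ω + t * ω = ω := by ring
  refine (sq_eq_sq₀ (norm_nonneg _) zero_le_one).1 ?_
  rw [greatCircleArc, norm_smul_add_smul_sq ha₀ ha₁, hcos]
  have := htrig ((1 - t) * ω) (t * ω)
  rw [hω] at this
  field_simp
  linear_combination this

theorem exists_hasDerivAt_greatCircleArc_norm_eq (ha₀ : ‖a₀‖ = 1) (ha₁ : ‖a₁‖ = 1)
    (hcos : ⟪a₀, a₁⟫ = Real.cos ω) (hsin : Real.sin ω ≠ 0) :
    ∃ A' : ℝ → E, (∀ t, HasDerivAt (greatCircleArc a₀ a₁ ω) (A' t) t) ∧ Continuous A' ∧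
      ∀ t, ‖A' t‖ = |ω| := by
  refine ⟨fun t => (-(ω * Real.cos ((1 - t) * ω)) / Real.sin ω) • a₀
    + (ω * Real.cos (t * ω) / Real.sin ω) • a₁, fun t => ?_, by fun_prop, fun t => ?_⟩
  · have h₀ : HasDerivAt (fun u : ℝ => Real.sin ((1 - u) * ω))
        (-(ω * Real.cos ((1 - t) * ω))) t := by
      simpa [mul_comm] using ((((hasDerivAt_id t).const_sub 1).mul_const ω).sin)
    have h₁ : HasDerivAt (fun u : ℝ => Real.sin (u * ω)) (ω * Real.cos (t * ω)) t := by
      simpa [mul_comm] using ((hasDerivAt_id t).mul_const ω).sin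
    exact ((h₀.div_const _).smul_const a₀).add ((h₁.div_const _).smul_const a₁)
  · have htrig : ∀ x y : ℝ, Real.cos x ^ 2 - 2 * Real.cos x * Real.cos y * Real.cos (x + y)
        + Real.cos y ^ 2 = Real.sin (x + y) ^ 2 := fun x y => by
      rw [Real.sin_add, Real.cos_add]
      nlinarith [Real.sin_sq_add_cos_sq x, Real.sin_sq_add_cos_sq y]
    have hω : (1 - t) * ω + t * ω = ω := by ring
    refine (sq_eq_sq₀ (norm_nonneg _) (abs_nonneg ω)).1 ?_
    have := htrig ((1 - t) * ω) (t * ω)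
    rw [hω] at this
    rw [norm_smul_add_smul_sq ha₀ ha₁, hcos, sq_abs]
    set x := (1 - t) * ω
    set y := t * ω
    field_simp
    linear_combination ω ^ 2 * this

theorem exists_hasDerivAt_norm_eq_of_greatCircleArc (ha₀ : ‖a₀‖ = 1) (ha₁ : ‖a₁‖ = 1)
    (hgt : -1 < ⟪a₀, a₁⟫) (hω : ω = Real.arccos ⟪a₀, a₁⟫) {A : ℝ → E}
    (hA : ∀ t, A t = if ω = 0 then a₀ else greatCircleArc a₀ a₁ ω t) :
    ∃ A' : ℝ → E, (∀ s, HasDerivAt A (A' s) s) ∧ Continuous A' ∧ (∀ s, ‖A' s‖ = ω) ∧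
      (∀ s, ‖A s‖ = 1) ∧ A 0 = a₀ ∧ A 1 = a₁ := by
  have hle : ⟪a₀, a₁⟫ ≤ 1 := by simpa [ha₀, ha₁] using real_inner_le_norm a₀ a₁
  by_cases hω0 : ω = 0
  · have ha : a₀ = a₁ := (inner_eq_one_iff_of_norm_eq_one ha₀ ha₁).1 <|
      le_antisymm hle (Real.arccos_eq_zero.1 (hω ▸ hω0))
    obtain rfl : A = fun _ => a₀ := funext fun s => by rw [hA, if_pos hω0]
    exact ⟨0, fun s => hasDerivAt_const s a₀, continuous_const, by simp [hω0], fun _ => ha₀, rfl,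
      ha⟩
  · obtain rfl : A = greatCircleArc a₀ a₁ ω := funext fun s => by rw [hA, if_neg hω0]
    have hω' : 0 < ω ∧ ω < Real.pi := hω ▸ ⟨Real.arccos_pos.2 (hle.lt_of_ne
      fun h => hω0 (by rw [hω, h, Real.arccos_one])), Real.arccos_lt_pi.2 hgt⟩
    have hsin : Real.sin ω ≠ 0 := (Real.sin_pos_of_pos_of_lt_pi hω'.1 hω'.2).ne'
    have hcos : ⟪a₀, a₁⟫ = Real.cos ω := by rw [hω, Real.cos_arccos hgt.le hle]
    obtain ⟨A', hA', hA'cont, hspeed⟩ := exists_hasDerivAt_greatCircleArc_norm_eq ha₀ ha₁ hcos hsin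
    exact ⟨A', hA', hA'cont, fun s => by rw [hspeed, abs_of_pos hω'.1],
      norm_greatCircleArc ha₀ ha₁ hcos hsin, greatCircleArc_zero hsin, greatCircleArc_one hsin⟩

end InnerProductSpace

theorem hasDerivWithinAt_integral_Icc {F : Type*} [NormedAddCommGroup F] [NormedSpace ℝ F]
    [CompleteSpace F] {f : ℝ → F} {a b t : ℝ} (hf : ContinuousOn f (Icc a b))
    (ht : t ∈ Icc a b) : HasDerivWithinAt (fun u => ∫ r in a..u, f r) (f t) (Icc a b) t := by
  have := Fact.mk ht
  exact intervalIntegral.integral_hasDerivWithinAt_right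
    ((hf.mono (Icc_subset_Icc_right ht.2)).intervalIntegrable_of_Icc ht.1)
    (hf.stronglyMeasurableAtFilter_nhdsWithin measurableSet_Icc t) (hf t ht)

theorem exists_hasDerivWithinAt_comp_reparam_and_energy_eq {E : Type*} [NormedAddCommGroup E]
    [NormedSpace ℝ E] {A A' : ℝ → E} {w l : ℝ → ℝ} {a b c v : ℝ} (hab : a ≤ b)
    (hw : ContinuousOn w (Icc a b)) (hw0 : ∀ t ∈ Icc a b, w t ≠ 0)
    (hc : c = ∫ t in a..b, (w t)⁻¹) (hl : ∀ t, l t = (∫ r in a..t, (w r)⁻¹) / c)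
    (hA : ∀ s, HasDerivAt A (A' s) s) (hA' : Continuous A') (hspeed : ∀ s, ‖A' s‖ = v) :
    ∃ α' : ℝ → E, (∀ t ∈ Icc a b, HasDerivWithinAt (fun u => A (l u)) (α' t) (Icc a b) t) ∧
      ContinuousOn α' (Icc a b) ∧ ∫ t in a..b, ‖α' t‖ ^ 2 * w t = v ^ 2 / c := by
  have hwinv : ContinuousOn (fun t => (w t)⁻¹) (Icc a b) := hw.inv₀ hw0
  have hl' : ∀ t ∈ Icc a b, HasDerivWithinAt l ((w t)⁻¹ / c) (Icc a b) t := fun t ht => by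
    simpa only [← funext hl] using (hasDerivWithinAt_integral_Icc hwinv ht).div_const c
  have hlcont : ContinuousOn l (Icc a b) := fun t ht => (hl' t ht).continuousWithinAt
  refine ⟨fun t => ((w t)⁻¹ / c) • A' (l t), fun t ht => (hA (l t)).scomp_hasDerivWithinAt t
    (hl' t ht), (hwinv.div_const c).smul (hA'.comp_continuousOn hlcont), ?_⟩
  have henergy : EqOn (fun t => ‖((w t)⁻¹ / c) • A' (l t)‖ ^ 2 * w t)
      (fun t => v ^ 2 / c ^ 2 * (w t)⁻¹) (uIcc a b) := fun t ht => by
    rw [uIcc_of_le hab] at ht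
    simp only [norm_smul, hspeed, Real.norm_eq_abs, mul_pow, sq_abs]
    field_simp [hw0 t ht]
  rw [intervalIntegral.integral_congr henergy, intervalIntegral.integral_const_mul, ← hc]
  rcases eq_or_ne c 0 with rfl | hc0
  · simp
  · field_simp

/-- Let `w : [0,1] → (0,∞)` be continuous, `a₀, a₁ ∈ ℝᵈ` unit vectors with
`⟨a₀,a₁⟩ > −1`, `ω = arccos⟨a₀,a₁⟩`, `c = ∫₀¹ w(t)⁻¹ dt`. Then the infimum of
`∫₀¹ |α'(t)|² w(t) dt` over all `C¹` unit-sphere-valued curves from `a₀` to `a₁` equals `ω²/c`,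
attained by `α = α̃ ∘ λ` where `α̃` is the great-circle arc (constant `a₀` if `ω = 0`) and
`λ(t) = (1/c)∫₀ᵗ w(r)⁻¹ dr`. -/
theorem stmt3 (d : ℕ) (w : ℝ → ℝ)
    (hw : ContinuousOn w (Set.Icc 0 1))
    (hwpos : ∀ t ∈ Set.Icc (0:ℝ) 1, 0 < w t)
    (a0 a1 : EuclideanSpace ℝ (Fin d)) (h0 : ‖a0‖ = 1) (h1 : ‖a1‖ = 1)
    (hgt : (-1 : ℝ) < ⟪a0, a1⟫)
    (ω c : ℝ) (hω : ω = Real.arccos ⟪a0, a1⟫)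
    (hc : c = ∫ t in (0:ℝ)..1, (w t)⁻¹)
    (A : ℝ → EuclideanSpace ℝ (Fin d))
    (hA : ∀ t, A t = if ω = 0 then a0 else
        (Real.sin ((1 - t) * ω) / Real.sin ω) • a0 + (Real.sin (t * ω) / Real.sin ω) • a1)
    (l : ℝ → ℝ) (hl : ∀ t, l t = (∫ r in (0:ℝ)..t, (w r)⁻¹) / c) :
    (∀ α α' : ℝ → EuclideanSpace ℝ (Fin d),
        (∀ t ∈ Set.Icc (0:ℝ) 1, HasDerivWithinAt α (α' t) (Set.Icc 0 1) t) →
        ContinuousOn α' (Set.Icc 0 1) →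
        (∀ t ∈ Set.Icc (0:ℝ) 1, ‖α t‖ = 1) → α 0 = a0 → α 1 = a1 →
        ω ^ 2 / c ≤ ∫ t in (0:ℝ)..1, ‖α' t‖ ^ 2 * w t) ∧
    (∃ α' : ℝ → EuclideanSpace ℝ (Fin d),
        (∀ t ∈ Set.Icc (0:ℝ) 1, HasDerivWithinAt (fun u => A (l u)) (α' t) (Set.Icc 0 1) t) ∧
        ContinuousOn α' (Set.Icc 0 1) ∧
        (∀ t ∈ Set.Icc (0:ℝ) 1, ‖A (l t)‖ = 1) ∧ A (l 0) = a0 ∧ A (l 1) = a1 ∧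
        (∫ t in (0:ℝ)..1, ‖α' t‖ ^ 2 * w t) = ω ^ 2 / c) := by
  have hcpos : 0 < c := by
    rw [hc]
    exact intervalIntegral.intervalIntegral_pos_of_pos_on
      ((hw.inv₀ fun t ht => (hwpos t ht).ne').intervalIntegrable_of_Icc zero_le_one)
      (fun t ht => inv_pos.2 (hwpos t (Ioo_subset_Icc_self ht))) one_pos
  refine ⟨fun α α' hα hα' hnorm hα0 hα1 => ?_, ?_⟩
  · rw [div_le_iff₀ hcpos, hω, hc, ← hα0, ← hα1]
    exact sq_arccos_inner_le_energy_mul_integral_inv zero_le_one hw hwpos hα hα' hnorm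
  obtain ⟨A', hA', hA'cont, hspeed, hAnorm, hA0, hA1⟩ :=
    exists_hasDerivAt_norm_eq_of_greatCircleArc h0 h1 hgt hω hA
  obtain ⟨α', hα', hα'cont, henergy⟩ := exists_hasDerivWithinAt_comp_reparam_and_energy_eq
    zero_le_one hw (fun t ht => (hwpos t ht).ne') hc hl hA' hA'cont hspeed
  have hl0 : l 0 = 0 := by simp [hl]
  have hl1 : l 1 = 1 := by rw [hl, ← hc, div_self hcpos.ne']
  exact ⟨α', hα', hα'cont, fun t _ => hAnorm _, by rw [hl0, hA0], by rw [hl1, hA1], henergy⟩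
end

section
/- Let σ > 0 and let φ:[0,1]×[0,1]→[0,1] be C², with ∂_sφ(t,s) > 0 for all (t,s), φ(t,0) = 0 and φ(t,1) = 1 for all t. Let τ:[0,1]×[0,1]→ℝ be C¹, and define ξ(t,s) = (cos τ(t,s), sin τ(t,s)), η = τ/(2σ), and q(t,s) = √(∂_sφ(t,s))·(cos η(t,s), sin η(t,s)) ∈ ℝ². Then (i) ∫₀¹ |q(t,s)|² ds = 1 for every t, and (ii) ∫₀¹∫₀¹ (∂_t∂_sφ)²/∂_sφ ds dt + σ⁻² ∫₀¹∫₀¹ |∂_tξ|² ∂_sφ ds dt = 4 ∫₀¹∫₀¹ |∂_t q(t,s)|² ds dt. -/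
/-!
Write `q = r (cos α, sin α)` with `r = √(∂ₛφ)` and `α = τ / (2σ)`. Differentiating in polar form,
`|∂ₜq|² = (∂ₜr)² + r² (∂ₜα)² = (∂ₜ∂ₛφ)² / (4 ∂ₛφ) + ∂ₛφ (∂ₜτ)² / (4σ²)`, and likewise
`|∂ₜξ|² = (∂ₜτ)²`, so identity (ii) already holds pointwise before integrating. Identity (i) is
`|q|² = ∂ₛφ` together with the fundamental theorem of calculus. The regularity of `φ` and `τ` makes
every integrand continuous on the compact square, which justifies splitting the integrals.
-/

open MeasureTheory Set Function Real

section PartialDerivatives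

variable {E : Type*} [NormedAddCommGroup E] [NormedSpace ℝ E] {f : ℝ → ℝ → E} {A B : Set ℝ}

theorem hasDerivWithinAt_fderivWithin_snd {t s : ℝ} (ht : t ∈ A)
    (hf : DifferentiableWithinAt ℝ (uncurry f) (A ×ˢ B) (t, s)) :
    HasDerivWithinAt (f t) (fderivWithin ℝ (uncurry f) (A ×ˢ B) (t, s) (0, 1)) B s :=
  hf.hasFDerivWithinAt.comp_hasDerivWithinAt s
    ((hasDerivAt_const s t).prodMk (hasDerivAt_id s)).hasDerivWithinAt
    fun _ hs' => mk_mem_prod ht hs'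

theorem hasDerivWithinAt_fderivWithin_fst {t s : ℝ} (hs : s ∈ B)
    (hf : DifferentiableWithinAt ℝ (uncurry f) (A ×ˢ B) (t, s)) :
    HasDerivWithinAt (fun t' => f t' s) (fderivWithin ℝ (uncurry f) (A ×ˢ B) (t, s) (1, 0)) A t :=
  hf.hasFDerivWithinAt.comp_hasDerivWithinAt (f := fun t' => (t', s)) t
    ((hasDerivAt_id t).prodMk (hasDerivAt_const t s)).hasDerivWithinAt
    fun _ ht' => mk_mem_prod ht' hs

variable {f' : ℝ → ℝ → E} {m n : WithTop ℕ∞}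

theorem contDiffOn_uncurry_of_hasDerivWithinAt_snd (hf : ContDiffOn ℝ n (uncurry f) (A ×ˢ B))
    (hmn : m + 1 ≤ n) (hA : UniqueDiffOn ℝ A) (hB : UniqueDiffOn ℝ B)
    (hf' : ∀ t ∈ A, ∀ s ∈ B, HasDerivWithinAt (f t) (f' t s) B s) :
    ContDiffOn ℝ m (uncurry f') (A ×ˢ B) := by
  refine ((hf.fderivWithin (hA.prod hB) hmn).clm_apply
    (contDiffOn_const (c := ((0 : ℝ), (1 : ℝ))))).congr ?_
  rintro ⟨t, s⟩ ⟨ht, hs⟩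
  have hdiff := hf.differentiableOn (ne_bot_of_le_ne_bot one_ne_zero (le_add_self.trans hmn))
  exact (hB s hs).eq_deriv _ (hf' t ht s hs)
    (hasDerivWithinAt_fderivWithin_snd ht (hdiff _ ⟨ht, hs⟩))

theorem contDiffOn_uncurry_of_hasDerivWithinAt_fst (hf : ContDiffOn ℝ n (uncurry f) (A ×ˢ B))
    (hmn : m + 1 ≤ n) (hA : UniqueDiffOn ℝ A) (hB : UniqueDiffOn ℝ B)
    (hf' : ∀ t ∈ A, ∀ s ∈ B, HasDerivWithinAt (fun t' => f t' s) (f' t s) A t) :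
    ContDiffOn ℝ m (uncurry f') (A ×ˢ B) := by
  refine ((hf.fderivWithin (hA.prod hB) hmn).clm_apply
    (contDiffOn_const (c := ((1 : ℝ), (0 : ℝ))))).congr ?_
  rintro ⟨t, s⟩ ⟨ht, hs⟩
  have hdiff := hf.differentiableOn (ne_bot_of_le_ne_bot one_ne_zero (le_add_self.trans hmn))
  exact (hA t ht).eq_deriv _ (hf' t ht s hs)
    (hasDerivWithinAt_fderivWithin_fst hs (hdiff _ ⟨ht, hs⟩))

end PartialDerivatives

section IteratedIntegrals

variable {a b c d : ℝ}

theorem ContinuousOn.intervalIntegral_of_uncurry {E : Type*} [NormedAddCommGroup E]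
    [NormedSpace ℝ E] {f : ℝ → ℝ → E} (hab : a ≤ b) (hcd : c ≤ d)
    (hf : ContinuousOn (uncurry f) (Icc a b ×ˢ Icc c d)) :
    ContinuousOn (fun t => ∫ s in c..d, f t s) (Icc a b) := by
  set p : ℝ × ℝ → ℝ × ℝ := fun x => (projIcc a b hab x.1, projIcc c d hcd x.2)
  have hp : Continuous p := (continuous_projIcc.subtype_val.comp continuous_fst).prodMk
    (continuous_projIcc.subtype_val.comp continuous_snd)
  have hfp : Continuous (uncurry f ∘ p) :=
    hf.comp_continuous hp fun x => ⟨(projIcc a b hab x.1).2, (projIcc c d hcd x.2).2⟩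
  refine ((intervalIntegral.continuous_parametric_intervalIntegral_of_continuous'
    (f := fun t s => (uncurry f ∘ p) (t, s)) hfp c d).continuousOn).congr
    fun t ht => intervalIntegral.integral_congr fun s hs => ?_
  rw [uIcc_of_le hcd] at hs
  simp only [p, comp_apply, uncurry_apply_pair, projIcc_of_mem hab ht, projIcc_of_mem hcd hs]

theorem intervalIntegral.integral_add_const_mul_eq_of_eqOn {f g h : ℝ → ℝ} {κ k : ℝ}
    (hf : IntervalIntegrable f volume a b) (hg : IntervalIntegrable g volume a b)
    (hfg : EqOn (fun x => f x + κ * g x) (fun x => k * h x) (uIcc a b)) :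
    (∫ x in a..b, f x) + κ * ∫ x in a..b, g x = k * ∫ x in a..b, h x := by
  rw [← integral_const_mul, ← integral_add hf (hg.const_mul κ), ← integral_const_mul]
  exact integral_congr hfg

theorem integral_integral_add_const_mul_eq_of_eqOn {f g h : ℝ → ℝ → ℝ} {κ k : ℝ}
    (hab : a ≤ b) (hcd : c ≤ d) (hf : ContinuousOn (uncurry f) (Icc a b ×ˢ Icc c d))
    (hg : ContinuousOn (uncurry g) (Icc a b ×ˢ Icc c d))
    (hfg : ∀ t ∈ Icc a b, ∀ s ∈ Icc c d, f t s + κ * g t s = k * h t s) :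
    (∫ t in a..b, ∫ s in c..d, f t s) + κ * (∫ t in a..b, ∫ s in c..d, g t s)
      = k * ∫ t in a..b, ∫ s in c..d, h t s := by
  have hint {u : ℝ → ℝ → ℝ} (hu : ContinuousOn (uncurry u) (Icc a b ×ˢ Icc c d)) :
      IntervalIntegrable (fun t => ∫ s in c..d, u t s) volume a b :=
    (hu.intervalIntegral_of_uncurry hab hcd).intervalIntegrable_of_Icc hab
  refine intervalIntegral.integral_add_const_mul_eq_of_eqOn (hint hf) (hint hg) fun t ht => ?_
  rw [uIcc_of_le hab] at ht
  refine intervalIntegral.integral_add_const_mul_eq_of_eqOn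
    ((hf.uncurry_left t ht).intervalIntegrable_of_Icc hcd)
    ((hg.uncurry_left t ht).intervalIntegrable_of_Icc hcd) fun s hs => ?_
  rw [uIcc_of_le hcd] at hs
  exact hfg t ht s hs

end IteratedIntegrals

theorem intervalIntegral.integral_eq_sub_of_hasDerivWithinAt_Icc {f f' : ℝ → ℝ} {a b : ℝ}
    (hab : a ≤ b) (hf : ∀ x ∈ Icc a b, HasDerivWithinAt f (f' x) (Icc a b) x)
    (hint : IntervalIntegrable f' volume a b) : ∫ x in a..b, f' x = f b - f a :=
  integral_eq_sub_of_hasDerivAt_of_le hab (fun x hx => (hf x hx).continuousWithinAt)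
    (fun x hx => (hf x (Ioo_subset_Icc_self hx)).hasDerivAt (Icc_mem_nhds hx.1 hx.2)) hint

theorem sq_add_sq_of_hasDerivWithinAt_polar {r α : ℝ → ℝ} {r' α' x' y' t : ℝ} {U : Set ℝ}
    (hU : UniqueDiffWithinAt ℝ U t) (hr : HasDerivWithinAt r r' U t)
    (hα : HasDerivWithinAt α α' U t)
    (hx : HasDerivWithinAt (fun t => r t * cos (α t)) x' U t)
    (hy : HasDerivWithinAt (fun t => r t * sin (α t)) y' U t) :
    x' ^ 2 + y' ^ 2 = r' ^ 2 + r t ^ 2 * α' ^ 2 := by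
  rw [hU.eq_deriv _ hx (hr.mul hα.cos), hU.eq_deriv _ hy (hr.mul hα.sin)]
  linear_combination (r' ^ 2 + r t ^ 2 * α' ^ 2) * cos_sq_add_sin_sq (α t)

theorem stmt5_general (σ : ℝ)
    (φ φs φts τ τt : ℝ → ℝ → ℝ)
    (hφC2 : ContDiffOn ℝ 2 (fun x : ℝ × ℝ => φ x.1 x.2) (Set.Icc 0 1 ×ˢ Set.Icc 0 1))
    (hφs : ∀ t ∈ Set.Icc (0:ℝ) 1, ∀ s ∈ Set.Icc (0:ℝ) 1,
        HasDerivWithinAt (fun s' => φ t s') (φs t s) (Set.Icc 0 1) s)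
    (hφts : ∀ t ∈ Set.Icc (0:ℝ) 1, ∀ s ∈ Set.Icc (0:ℝ) 1,
        HasDerivWithinAt (fun t' => φs t' s) (φts t s) (Set.Icc 0 1) t)
    (hτC1 : ContDiffOn ℝ 1 (fun x : ℝ × ℝ => τ x.1 x.2) (Set.Icc 0 1 ×ˢ Set.Icc 0 1))
    (hτt : ∀ t ∈ Set.Icc (0:ℝ) 1, ∀ s ∈ Set.Icc (0:ℝ) 1,
        HasDerivWithinAt (fun t' => τ t' s) (τt t s) (Set.Icc 0 1) t)
    (hφspos : ∀ t ∈ Set.Icc (0:ℝ) 1, ∀ s ∈ Set.Icc (0:ℝ) 1, 0 < φs t s)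
    (hφ0 : ∀ t ∈ Set.Icc (0:ℝ) 1, φ t 0 = 0)
    (hφ1 : ∀ t ∈ Set.Icc (0:ℝ) 1, φ t 1 = 1)
    (η q1 q2 ξ1 ξ2 q1t q2t ξ1t ξ2t : ℝ → ℝ → ℝ)
    (hη : ∀ t s, η t s = τ t s / (2 * σ))
    (hq1 : ∀ t s, q1 t s = Real.sqrt (φs t s) * Real.cos (η t s))
    (hq2 : ∀ t s, q2 t s = Real.sqrt (φs t s) * Real.sin (η t s))
    (hξ1 : ∀ t s, ξ1 t s = Real.cos (τ t s))
    (hξ2 : ∀ t s, ξ2 t s = Real.sin (τ t s))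
    (hq1t : ∀ t ∈ Set.Icc (0:ℝ) 1, ∀ s ∈ Set.Icc (0:ℝ) 1,
        HasDerivWithinAt (fun t' => q1 t' s) (q1t t s) (Set.Icc 0 1) t)
    (hq2t : ∀ t ∈ Set.Icc (0:ℝ) 1, ∀ s ∈ Set.Icc (0:ℝ) 1,
        HasDerivWithinAt (fun t' => q2 t' s) (q2t t s) (Set.Icc 0 1) t)
    (hξ1t : ∀ t ∈ Set.Icc (0:ℝ) 1, ∀ s ∈ Set.Icc (0:ℝ) 1,
        HasDerivWithinAt (fun t' => ξ1 t' s) (ξ1t t s) (Set.Icc 0 1) t)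
    (hξ2t : ∀ t ∈ Set.Icc (0:ℝ) 1, ∀ s ∈ Set.Icc (0:ℝ) 1,
        HasDerivWithinAt (fun t' => ξ2 t' s) (ξ2t t s) (Set.Icc 0 1) t) :
    (∀ t ∈ Set.Icc (0:ℝ) 1, (∫ s in (0:ℝ)..1, ((q1 t s) ^ 2 + (q2 t s) ^ 2)) = 1) ∧
    ((∫ t in (0:ℝ)..1, ∫ s in (0:ℝ)..1, (φts t s) ^ 2 / φs t s)
        + (σ ^ 2)⁻¹ * ∫ t in (0:ℝ)..1, ∫ s in (0:ℝ)..1, ((ξ1t t s) ^ 2 + (ξ2t t s) ^ 2) * φs t s)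
      = 4 * ∫ t in (0:ℝ)..1, ∫ s in (0:ℝ)..1, ((q1t t s) ^ 2 + (q2t t s) ^ 2) := by
  simp only [hq1, hq2, hη, hξ1, hξ2] at hq1t hq2t hξ1t hξ2t ⊢
  have hI : UniqueDiffOn ℝ (Icc (0:ℝ) 1) := uniqueDiffOn_Icc zero_lt_one
  have hφs_C1 : ContDiffOn ℝ 1 (uncurry φs) (Icc 0 1 ×ˢ Icc 0 1) :=
    contDiffOn_uncurry_of_hasDerivWithinAt_snd hφC2 (by norm_num) hI hI hφs
  have hφts_cont : ContinuousOn (uncurry φts) (Icc 0 1 ×ˢ Icc 0 1) :=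
    (contDiffOn_uncurry_of_hasDerivWithinAt_fst hφs_C1 (m := 0) (by norm_num) hI hI
      hφts).continuousOn
  have hτt_cont : ContinuousOn (uncurry τt) (Icc 0 1 ×ˢ Icc 0 1) :=
    (contDiffOn_uncurry_of_hasDerivWithinAt_fst hτC1 (m := 0) (by norm_num) hI hI hτt).continuousOn
  have hξt (t) (ht : t ∈ Icc (0:ℝ) 1) (s) (hs : s ∈ Icc (0:ℝ) 1) :
      ξ1t t s ^ 2 + ξ2t t s ^ 2 = τt t s ^ 2 := by
    simpa using sq_add_sq_of_hasDerivWithinAt_polar (hI t ht) (hasDerivWithinAt_const t _ 1)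
      (hτt t ht s hs) (by simpa only [one_mul] using hξ1t t ht s hs)
      (by simpa only [one_mul] using hξ2t t ht s hs)
  refine ⟨fun t ht => ?_, ?_⟩
  · calc ∫ s in (0:ℝ)..1, (√(φs t s) * cos (τ t s / (2 * σ))) ^ 2
          + (√(φs t s) * sin (τ t s / (2 * σ))) ^ 2
        _ = ∫ s in (0:ℝ)..1, φs t s := intervalIntegral.integral_congr fun s hs => by
          rw [uIcc_of_le zero_le_one] at hs
          simp only [mul_pow, ← mul_add, cos_sq_add_sin_sq, mul_one,
            sq_sqrt (hφspos t ht s hs).le]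
        _ = φ t 1 - φ t 0 := intervalIntegral.integral_eq_sub_of_hasDerivWithinAt_Icc zero_le_one
          (hφs t ht) ((hφs_C1.continuousOn.uncurry_left t ht).intervalIntegrable_of_Icc zero_le_one)
        _ = 1 := by rw [hφ1 t ht, hφ0 t ht, sub_zero]
  · refine integral_integral_add_const_mul_eq_of_eqOn zero_le_one zero_le_one
      ((hφts_cont.pow 2).div hφs_C1.continuousOn fun x hx => (hφspos _ hx.1 _ hx.2).ne')
      (((hτt_cont.pow 2).mul hφs_C1.continuousOn).congr fun x hx => ?_) fun t ht s hs => ?_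
    · simp only [uncurry, Pi.mul_apply, Pi.pow_apply, hξt _ hx.1 _ hx.2]
    · have hpos := hφspos t ht s hs
      rw [hξt t ht s hs, sq_add_sq_of_hasDerivWithinAt_polar (hI t ht)
        ((hφts t ht s hs).sqrt hpos.ne') ((hτt t ht s hs).div_const _) (hq1t t ht s hs)
        (hq2t t ht s hs), div_pow, mul_pow, sq_sqrt hpos.le]
      ring

/-- Let `σ > 0`, `φ : [0,1]² → [0,1]` be `C²` with `∂_sφ > 0`, `φ(t,0) = 0`,
`φ(t,1) = 1`. Let `τ : [0,1]² → ℝ` be `C¹` and define `ξ = (cos τ, sin τ)`, `η = τ/(2σ)`,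
`q(t,s) = √(∂_sφ(t,s))·(cos η, sin η) ∈ ℝ²`. Then (i) `∫₀¹ |q(t,s)|² ds = 1` for every `t`, and
(ii) `∫₀¹∫₀¹ (∂_t∂_sφ)²/∂_sφ ds dt + σ⁻² ∫₀¹∫₀¹ |∂_tξ|² ∂_sφ ds dt = 4∫₀¹∫₀¹ |∂_tq|² ds dt`. -/
theorem stmt5 (σ : ℝ) (hσ : 0 < σ)
    (φ φs φts τ τt : ℝ → ℝ → ℝ)
    (hφC2 : ContDiffOn ℝ 2 (fun x : ℝ × ℝ => φ x.1 x.2) (Set.Icc 0 1 ×ˢ Set.Icc 0 1))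
    (hφrange : ∀ t ∈ Set.Icc (0:ℝ) 1, ∀ s ∈ Set.Icc (0:ℝ) 1, φ t s ∈ Set.Icc (0:ℝ) 1)
    (hφs : ∀ t ∈ Set.Icc (0:ℝ) 1, ∀ s ∈ Set.Icc (0:ℝ) 1,
        HasDerivWithinAt (fun s' => φ t s') (φs t s) (Set.Icc 0 1) s)
    (hφts : ∀ t ∈ Set.Icc (0:ℝ) 1, ∀ s ∈ Set.Icc (0:ℝ) 1,
        HasDerivWithinAt (fun t' => φs t' s) (φts t s) (Set.Icc 0 1) t)
    (hτC1 : ContDiffOn ℝ 1 (fun x : ℝ × ℝ => τ x.1 x.2) (Set.Icc 0 1 ×ˢ Set.Icc 0 1))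
    (hτt : ∀ t ∈ Set.Icc (0:ℝ) 1, ∀ s ∈ Set.Icc (0:ℝ) 1,
        HasDerivWithinAt (fun t' => τ t' s) (τt t s) (Set.Icc 0 1) t)
    (hφspos : ∀ t ∈ Set.Icc (0:ℝ) 1, ∀ s ∈ Set.Icc (0:ℝ) 1, 0 < φs t s)
    (hφ0 : ∀ t ∈ Set.Icc (0:ℝ) 1, φ t 0 = 0)
    (hφ1 : ∀ t ∈ Set.Icc (0:ℝ) 1, φ t 1 = 1)
    (η q1 q2 ξ1 ξ2 q1t q2t ξ1t ξ2t : ℝ → ℝ → ℝ)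
    (hη : ∀ t s, η t s = τ t s / (2 * σ))
    (hq1 : ∀ t s, q1 t s = Real.sqrt (φs t s) * Real.cos (η t s))
    (hq2 : ∀ t s, q2 t s = Real.sqrt (φs t s) * Real.sin (η t s))
    (hξ1 : ∀ t s, ξ1 t s = Real.cos (τ t s))
    (hξ2 : ∀ t s, ξ2 t s = Real.sin (τ t s))
    (hq1t : ∀ t ∈ Set.Icc (0:ℝ) 1, ∀ s ∈ Set.Icc (0:ℝ) 1,
        HasDerivWithinAt (fun t' => q1 t' s) (q1t t s) (Set.Icc 0 1) t)
    (hq2t : ∀ t ∈ Set.Icc (0:ℝ) 1, ∀ s ∈ Set.Icc (0:ℝ) 1,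
        HasDerivWithinAt (fun t' => q2 t' s) (q2t t s) (Set.Icc 0 1) t)
    (hξ1t : ∀ t ∈ Set.Icc (0:ℝ) 1, ∀ s ∈ Set.Icc (0:ℝ) 1,
        HasDerivWithinAt (fun t' => ξ1 t' s) (ξ1t t s) (Set.Icc 0 1) t)
    (hξ2t : ∀ t ∈ Set.Icc (0:ℝ) 1, ∀ s ∈ Set.Icc (0:ℝ) 1,
        HasDerivWithinAt (fun t' => ξ2 t' s) (ξ2t t s) (Set.Icc 0 1) t) :
    (∀ t ∈ Set.Icc (0:ℝ) 1, (∫ s in (0:ℝ)..1, ((q1 t s) ^ 2 + (q2 t s) ^ 2)) = 1) ∧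
    ((∫ t in (0:ℝ)..1, ∫ s in (0:ℝ)..1, (φts t s) ^ 2 / φs t s)
        + (σ ^ 2)⁻¹ * ∫ t in (0:ℝ)..1, ∫ s in (0:ℝ)..1, ((ξ1t t s) ^ 2 + (ξ2t t s) ^ 2) * φs t s)
      = 4 * ∫ t in (0:ℝ)..1, ∫ s in (0:ℝ)..1, ((q1t t s) ^ 2 + (q2t t s) ^ 2) :=
  stmt5_general σ φ φs φts τ τt hφC2 hφs hφts hτC1 hτt hφspos hφ0 hφ1 η q1 q2 ξ1 ξ2 q1t q2t ξ1t ξ2t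
    hη hq1 hq2 hξ1 hξ2 hq1t hq2t hξ1t hξ2t
end

section
/- Let u, v ∈ ℝ² with |u| = 1 and v ≠ 0. Let A, B:[0,1]→[0,∞) be continuous with A(0) = 1, B(0) = 0, and suppose q(t) := A(t)u + B(t)v ≠ 0 for all t ∈ [0,1]. Let η:[0,1]→ℝ be continuous with q(t) = |q(t)|·(cos η(t), sin η(t)) for all t and u = (cos η(0), sin η(0)). Then |η(t) − η(0)| ≤ π for all t ∈ [0,1]. -/
/-!
Let `θ` be a polar angle of `v` and let `φ` bisect the arc of length at most `π` between
`η 0` and `θ`. Both `u` and `v` then have nonnegative component along `(cos φ, sin φ)`, hence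
so does every point `q t` of the cone they span, i.e. `cos (η t - φ) ≥ 0`. Since `η` is
continuous and starts within `π / 2` of `φ`, it can never cross into the region where the
cosine is negative, so `|η t - φ| ≤ π / 2` and `|η t - η 0| ≤ π`.
-/

open Real Set

theorem exists_eq_mul_cos_and_eq_mul_sin (x y : ℝ) :
    ∃ r θ : ℝ, 0 ≤ r ∧ x = r * cos θ ∧ y = r * sin θ :=
  ⟨‖(⟨x, y⟩ : ℂ)‖, Complex.arg ⟨x, y⟩, norm_nonneg _,
    (Complex.norm_mul_cos_arg ⟨x, y⟩).symm, (Complex.norm_mul_sin_arg ⟨x, y⟩).symm⟩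

theorem exists_abs_sub_le_pi_div_two_and_cos_sub_nonneg (α θ : ℝ) :
    ∃ φ : ℝ, |α - φ| ≤ π / 2 ∧ 0 ≤ cos (θ - φ) := by
  set δ := ((θ - α : ℝ) : Angle).toReal
  have hδ : |δ| ≤ π := Angle.abs_toReal_le_pi _
  refine ⟨α + δ / 2, by rw [sub_add_cancel_left, abs_neg, abs_div, abs_two]; linarith, ?_⟩
  have hcos : cos (θ - (α + δ / 2)) = cos (δ / 2) := by
    rw [← Angle.cos_coe, ← Angle.cos_coe, show θ - (α + δ / 2) = (θ - α) - δ / 2 by ring,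
      Angle.coe_sub, ← Angle.coe_toReal ((θ - α : ℝ) : Angle), ← Angle.coe_sub, sub_half]
  rw [hcos]
  exact cos_nonneg_of_mem_Icc ⟨by linarith [neg_abs_le δ], by linarith [le_abs_self δ]⟩

theorem cos_sub_nonneg_of_inner_nonneg {x y r η φ : ℝ} (hr : 0 ≤ r) (hxy : (x, y) ≠ (0, 0))
    (hx : x = r * cos η) (hy : y = r * sin η) (hinner : 0 ≤ x * cos φ + y * sin φ) :
    0 ≤ cos (η - φ) := by
  have hr_pos : 0 < r := hr.lt_of_ne fun h => hxy (by simp [hx, hy, ← h])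
  have hpolar : x * cos φ + y * sin φ = r * cos (η - φ) := by rw [hx, hy, cos_sub]; ring
  rw [hpolar] at hinner
  exact nonneg_of_mul_nonneg_right (by linarith) hr_pos

theorem IsPreconnected.le_pi_div_two_of_cos_nonneg {X : Type*} [TopologicalSpace X] {S : Set X}
    (hS : IsPreconnected S) {f : X → ℝ} (hf : ContinuousOn f S) (hcos : ∀ s ∈ S, 0 ≤ cos (f s))
    {x₀ : X} (hx₀ : x₀ ∈ S) (hfx₀ : f x₀ ≤ π / 2) : ∀ s ∈ S, f s ≤ π / 2 := by
  intro s hs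
  by_contra! hlt
  -- `f` would have to pass through `min (f s) π`, where the cosine is negative.
  have hc : π / 2 < min (f s) π := lt_min hlt (by linarith [pi_pos])
  obtain ⟨w, hw, hfw⟩ := hS.intermediate_value hx₀ hs hf
    (⟨by linarith, min_le_left _ _⟩ : min (f s) π ∈ Icc (f x₀) (f s))
  have hneg : cos (min (f s) π) < 0 :=
    cos_neg_of_pi_div_two_lt_of_lt hc ((min_le_right _ _).trans_lt (by linarith [pi_pos]))
  linarith [hfw ▸ hcos w hw]

theorem IsPreconnected.abs_le_pi_div_two_of_cos_nonneg {X : Type*} [TopologicalSpace X]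
    {S : Set X} (hS : IsPreconnected S) {f : X → ℝ} (hf : ContinuousOn f S)
    (hcos : ∀ s ∈ S, 0 ≤ cos (f s)) {x₀ : X} (hx₀ : x₀ ∈ S) (hfx₀ : |f x₀| ≤ π / 2) :
    ∀ s ∈ S, |f s| ≤ π / 2 := by
  intro s hs
  rw [abs_le] at hfx₀ ⊢
  refine ⟨?_, hS.le_pi_div_two_of_cos_nonneg hf hcos hx₀ hfx₀.2 s hs⟩
  have := hS.le_pi_div_two_of_cos_nonneg hf.neg (fun s hs => (cos_neg (f s)).symm ▸ hcos s hs)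
    hx₀ (by simp only [Pi.neg_apply]; linarith) s hs
  simp only [Pi.neg_apply] at this
  linarith

theorem stmt10_general (u1 u2 v1 v2 : ℝ)
    (A B : ℝ → ℝ)
    (hAnn : ∀ t ∈ Set.Icc (0:ℝ) 1, 0 ≤ A t) (hBnn : ∀ t ∈ Set.Icc (0:ℝ) 1, 0 ≤ B t)
    (q1 q2 : ℝ → ℝ)
    (hq1 : ∀ t, q1 t = A t * u1 + B t * v1)
    (hq2 : ∀ t, q2 t = A t * u2 + B t * v2)
    (hqne : ∀ t ∈ Set.Icc (0:ℝ) 1, (q1 t, q2 t) ≠ (0, 0))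
    (η : ℝ → ℝ) (hηc : ContinuousOn η (Set.Icc 0 1))
    (hlift1 : ∀ t ∈ Set.Icc (0:ℝ) 1,
        q1 t = Real.sqrt ((q1 t) ^ 2 + (q2 t) ^ 2) * Real.cos (η t))
    (hlift2 : ∀ t ∈ Set.Icc (0:ℝ) 1,
        q2 t = Real.sqrt ((q1 t) ^ 2 + (q2 t) ^ 2) * Real.sin (η t))
    (hu1 : u1 = Real.cos (η 0)) (hu2 : u2 = Real.sin (η 0)) :
    ∀ t ∈ Set.Icc (0:ℝ) 1, |η t - η 0| ≤ Real.pi := by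
  obtain ⟨r, θ, hr, hv1, hv2⟩ := exists_eq_mul_cos_and_eq_mul_sin v1 v2
  obtain ⟨φ, hφ, hθφ⟩ := exists_abs_sub_le_pi_div_two_and_cos_sub_nonneg (η 0) θ
  have hu : 0 ≤ cos (η 0 - φ) := cos_nonneg_of_mem_Icc (abs_le.mp hφ)
  have hcone : ∀ s ∈ Icc (0 : ℝ) 1, 0 ≤ cos (η s - φ) := by
    intro s hs
    refine cos_sub_nonneg_of_inner_nonneg (sqrt_nonneg _) (hqne s hs) (hlift1 s hs)
      (hlift2 s hs) ?_
    have hpair : q1 s * cos φ + q2 s * sin φ = A s * cos (η 0 - φ) + B s * (r * cos (θ - φ)) := by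
      rw [hq1, hq2, hu1, hu2, hv1, hv2, cos_sub, cos_sub]; ring
    rw [hpair]
    have := hAnn s hs
    have := hBnn s hs
    positivity
  have hnear := isPreconnected_Icc.abs_le_pi_div_two_of_cos_nonneg (hηc.sub continuousOn_const)
    hcone (left_mem_Icc.mpr zero_le_one) hφ
  intro t ht
  calc |η t - η 0| ≤ |η t - φ| + |φ - η 0| := abs_sub_le _ _ _
    _ ≤ π / 2 + π / 2 := add_le_add (hnear t ht) (abs_sub_comm φ (η 0) ▸ hφ)
    _ = π := add_halves π

/-- Let `u, v ∈ ℝ²` (written in components) with `|u| = 1` and `v ≠ 0`. Let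
`A, B : [0,1] → [0,∞)` be continuous with `A(0) = 1`, `B(0) = 0`, and suppose
`q(t) = A(t)u + B(t)v ≠ 0` for all `t ∈ [0,1]`. Let `η : [0,1] → ℝ` be continuous with
`q(t) = |q(t)|·(cos η(t), sin η(t))` for all `t` and `u = (cos η(0), sin η(0))`. Then
`|η(t) − η(0)| ≤ π` for all `t ∈ [0,1]`. -/
theorem stmt10 (u1 u2 v1 v2 : ℝ) (hu : u1 ^ 2 + u2 ^ 2 = 1) (hv : (v1, v2) ≠ (0, 0))
    (A B : ℝ → ℝ)
    (hAc : ContinuousOn A (Set.Icc 0 1)) (hBc : ContinuousOn B (Set.Icc 0 1))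
    (hAnn : ∀ t ∈ Set.Icc (0:ℝ) 1, 0 ≤ A t) (hBnn : ∀ t ∈ Set.Icc (0:ℝ) 1, 0 ≤ B t)
    (hA0 : A 0 = 1) (hB0 : B 0 = 0)
    (q1 q2 : ℝ → ℝ)
    (hq1 : ∀ t, q1 t = A t * u1 + B t * v1)
    (hq2 : ∀ t, q2 t = A t * u2 + B t * v2)
    (hqne : ∀ t ∈ Set.Icc (0:ℝ) 1, (q1 t, q2 t) ≠ (0, 0))
    (η : ℝ → ℝ) (hηc : ContinuousOn η (Set.Icc 0 1))
    (hlift1 : ∀ t ∈ Set.Icc (0:ℝ) 1,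
        q1 t = Real.sqrt ((q1 t) ^ 2 + (q2 t) ^ 2) * Real.cos (η t))
    (hlift2 : ∀ t ∈ Set.Icc (0:ℝ) 1,
        q2 t = Real.sqrt ((q1 t) ^ 2 + (q2 t) ^ 2) * Real.sin (η t))
    (hu1 : u1 = Real.cos (η 0)) (hu2 : u2 = Real.sin (η 0)) :
    ∀ t ∈ Set.Icc (0:ℝ) 1, |η t - η 0| ≤ Real.pi :=
  stmt10_general u1 u2 v1 v2 A B hAnn hBnn q1 q2 hq1 hq2 hqne η hηc hlift1 hlift2 hu1 hu2
end

section
/- For every real number x, cos( arccos(cos x) / 4 ) = max( |cos(x/4)|, |sin(x/4)| ). -/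
lemma stmt14_aux (u v : ℝ) (hu : 1/2 ≤ u) (hv : 1/2 ≤ v)
    (h : (2*u-1)^2 = (2*v-1)^2) : u = v := by nlinarith

lemma stmt14_aux2 (c m : ℝ) (hc : 0 ≤ c) (hm : 0 ≤ m) (h : c^2 = m^2) : c = m := by
  nlinarith [sq_nonneg (c - m), sq_nonneg (c + m)]

/-- For every real number `x`,
`cos(arccos(cos x)/4) = max(|cos(x/4)|, |sin(x/4)|)`. -/
theorem stmt14 (x : ℝ) :
    Real.cos (Real.arccos (Real.cos x) / 4)
      = max |Real.cos (x / 4)| |Real.sin (x / 4)| := by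
  have pi_pos := Real.pi_pos
  set A := Real.arccos (Real.cos x) with hA
  have hA0 : 0 ≤ A := Real.arccos_nonneg _
  have hAπ : A ≤ Real.pi := Real.arccos_le_pi _
  have hcA : Real.cos A = Real.cos x :=
    Real.cos_arccos (Real.neg_one_le_cos x) (Real.cos_le_one x)
  set c := Real.cos (A / 4) with hc
  set m := max |Real.cos (x / 4)| |Real.sin (x / 4)| with hm
  have hc0 : 0 ≤ c := Real.cos_nonneg_of_mem_Icc ⟨by linarith, by linarith⟩
  have hcge : Real.cos (Real.pi / 4) ≤ c := by
    apply Real.cos_le_cos_of_nonneg_of_le_pi (by linarith) (by linarith) (by linarith)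
  have hsqrt : Real.cos (Real.pi / 4) = Real.sqrt 2 / 2 := Real.cos_pi_div_four
  have h2 : (Real.sqrt 2) ^ 2 = 2 := Real.sq_sqrt (by norm_num)
  have hs0 : 0 ≤ Real.sqrt 2 := Real.sqrt_nonneg 2
  have hc2 : 1 / 2 ≤ c ^ 2 := by
    rw [hsqrt] at hcge
    nlinarith
  have hq1 : Real.cos A = 2 * (2 * c ^ 2 - 1) ^ 2 - 1 := by
    have h1 : Real.cos (2 * (A / 2)) = 2 * Real.cos (A / 2) ^ 2 - 1 := Real.cos_two_mul _
    have h2' : Real.cos (2 * (A / 4)) = 2 * Real.cos (A / 4) ^ 2 - 1 := Real.cos_two_mul _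
    rw [show (2 : ℝ) * (A / 2) = A by ring] at h1
    rw [show (2 : ℝ) * (A / 4) = A / 2 by ring] at h2'
    rw [h1, h2']
  have hq2 : Real.cos x = 2 * (2 * Real.cos (x / 4) ^ 2 - 1) ^ 2 - 1 := by
    have h1 : Real.cos (2 * (x / 2)) = 2 * Real.cos (x / 2) ^ 2 - 1 := Real.cos_two_mul _
    have h2' : Real.cos (2 * (x / 4)) = 2 * Real.cos (x / 4) ^ 2 - 1 := Real.cos_two_mul _
    rw [show (2 : ℝ) * (x / 2) = x by ring] at h1
    rw [show (2 : ℝ) * (x / 4) = x / 2 by ring] at h2'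
    rw [h1, h2']
  have hpyth : Real.sin (x / 4) ^ 2 + Real.cos (x / 4) ^ 2 = 1 :=
    Real.sin_sq_add_cos_sq (x / 4)
  have hm0 : 0 ≤ m := le_trans (abs_nonneg _) (le_max_left _ _)
  have hm2 : m ^ 2 = Real.cos (x / 4) ^ 2 ∨ m ^ 2 = Real.sin (x / 4) ^ 2 := by
    rcases max_cases |Real.cos (x / 4)| |Real.sin (x / 4)| with ⟨h, _⟩ | ⟨h, _⟩
    · left; rw [hm, h, sq_abs]
    · right; rw [hm, h, sq_abs]
  have hm2ge : 1 / 2 ≤ m ^ 2 := by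
    have h1 : |Real.cos (x / 4)| ≤ m := le_max_left _ _
    have h2' : |Real.sin (x / 4)| ≤ m := le_max_right _ _
    nlinarith [sq_abs (Real.cos (x / 4)), sq_abs (Real.sin (x / 4)),
      abs_nonneg (Real.cos (x / 4)), abs_nonneg (Real.sin (x / 4))]
  have hqm : Real.cos x = 2 * (2 * m ^ 2 - 1) ^ 2 - 1 := by
    rcases hm2 with h | h
    · rw [h]; exact hq2
    · rw [h]
      linear_combination hq2 + (8 * (Real.cos (x / 4) ^ 2 - Real.sin (x / 4) ^ 2)) * hpyth
  have hu : (2 * c ^ 2 - 1) ^ 2 = (2 * m ^ 2 - 1) ^ 2 := by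
    linear_combination (hcA - hq1 + hqm) / 2
  have hsq : c ^ 2 = m ^ 2 := stmt14_aux _ _ hc2 hm2ge hu
  exact stmt14_aux2 _ _ hc0 hm0 hsq
end

section
/- Let θ:[0,1]→ℝ be measurable and let φ:[0,1]→[0,1] be a C¹ increasing bijection with φ(0)=0, φ(1)=1 and φ' > 0 (so that ∫₀¹ φ'(s) ds = 1). Define f(s) = √(2φ'(s))·cos(θ(s)/2) and g(s) = √(2φ'(s))·sin(θ(s)/2). Then the two conditions ∫₀¹ φ'(s)·cos θ(s) ds = 0 and ∫₀¹ φ'(s)·sin θ(s) ds = 0 hold if and only if ∫₀¹ f(s)² ds = 1, ∫₀¹ g(s)² ds = 1, and ∫₀¹ f(s)·g(s) ds = 0. -/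
/-!
By the half-angle formulas, `f² = φ' (1 + cos θ)`, `g² = φ' (1 - cos θ)` and `f g = φ' sin θ`,
while `∫₀¹ φ' = φ 1 - φ 0 = 1`. Hence `∫ f² = 1 + ∫ φ' cos θ`, `∫ g² = 1 - ∫ φ' cos θ` and
`∫ f g = ∫ φ' sin θ`, so both sides of the equivalence say that `∫ φ' cos θ = ∫ φ' sin θ = 0`.
-/

open MeasureTheory Set

namespace Real

lemma sq_sqrt_two_mul_mul_cos_half {w : ℝ} (hw : 0 ≤ w) (t : ℝ) :
    (√(2 * w) * cos (t / 2)) ^ 2 = w + w * cos t := by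
  rw [mul_pow, sq_sqrt (by positivity), cos_sq, show 2 * (t / 2) = t by ring]
  ring

lemma sq_sqrt_two_mul_mul_sin_half {w : ℝ} (hw : 0 ≤ w) (t : ℝ) :
    (√(2 * w) * sin (t / 2)) ^ 2 = w - w * cos t := by
  rw [mul_pow, sq_sqrt (by positivity), sin_sq, cos_sq, show 2 * (t / 2) = t by ring]
  ring

lemma sqrt_two_mul_mul_cos_half_mul_sqrt_two_mul_mul_sin_half {w : ℝ} (hw : 0 ≤ w) (t : ℝ) :
    √(2 * w) * cos (t / 2) * (√(2 * w) * sin (t / 2)) = w * sin t := by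
  calc √(2 * w) * cos (t / 2) * (√(2 * w) * sin (t / 2))
      = √(2 * w) ^ 2 * (sin (t / 2) * cos (t / 2)) := by ring
    _ = w * sin (2 * (t / 2)) := by rw [sq_sqrt (by positivity), sin_two_mul]; ring
    _ = w * sin t := by rw [show 2 * (t / 2) = t by ring]

end Real

lemma intervalIntegrable_mul_of_continuousOn_of_norm_le {w u : ℝ → ℝ} {a b C : ℝ}
    (hw : ContinuousOn w (uIcc a b)) (hu : Measurable u) (hC : ∀ x, ‖u x‖ ≤ C) :
    IntervalIntegrable (fun s => w s * u s) volume a b :=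
  intervalIntegrable_iff.mpr <| (hw.intervalIntegrable (μ := volume)).def'.mul_bdd
    hu.aestronglyMeasurable (Filter.Eventually.of_forall hC)

lemma integral_eq_sub_of_hasDerivWithinAt_Icc {φ φd : ℝ → ℝ} {a b : ℝ} (hab : a ≤ b)
    (hφ : ∀ s ∈ Icc a b, HasDerivWithinAt φ (φd s) (Icc a b) s)
    (hφd : ContinuousOn φd (Icc a b)) :
    ∫ s in a..b, φd s = φ b - φ a :=
  intervalIntegral.integral_eq_sub_of_hasDerivAt_of_le hab
    (fun s hs => (hφ s hs).continuousWithinAt)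
    (fun s hs => (hφ s (Ioo_subset_Icc_self hs)).hasDerivAt (Icc_mem_nhds hs.1 hs.2))
    (hφd.intervalIntegrable_of_Icc hab)

/-- Let `θ : [0,1] → ℝ` be measurable and `φ : [0,1] → [0,1]` a `C¹` increasing
bijection with `φ(0)=0`, `φ(1)=1`, `φ' > 0`. Define `f = √(2φ')·cos(θ/2)` and
`g = √(2φ')·sin(θ/2)`. Then `∫₀¹ φ' cos θ = 0 ∧ ∫₀¹ φ' sin θ = 0` holds if and only if
`∫₀¹ f² = 1`, `∫₀¹ g² = 1` and `∫₀¹ f·g = 0`. -/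
theorem stmt17 (θ : ℝ → ℝ) (hθ : Measurable θ)
    (φ φd : ℝ → ℝ)
    (hφ : ∀ s ∈ Set.Icc (0:ℝ) 1, HasDerivWithinAt φ (φd s) (Set.Icc (0:ℝ) 1) s)
    (hφc : ContinuousOn φd (Set.Icc (0:ℝ) 1))
    (hφpos : ∀ s ∈ Set.Icc (0:ℝ) 1, 0 < φd s)
    (hφ0 : φ 0 = 0) (hφ1 : φ 1 = 1)
    (f g : ℝ → ℝ)
    (hf : ∀ s, f s = Real.sqrt (2 * φd s) * Real.cos (θ s / 2))
    (hg : ∀ s, g s = Real.sqrt (2 * φd s) * Real.sin (θ s / 2)) :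
    ((∫ s in (0:ℝ)..1, φd s * Real.cos (θ s)) = 0 ∧
     (∫ s in (0:ℝ)..1, φd s * Real.sin (θ s)) = 0)
    ↔ ((∫ s in (0:ℝ)..1, (f s) ^ 2) = 1 ∧ (∫ s in (0:ℝ)..1, (g s) ^ 2) = 1 ∧
       (∫ s in (0:ℝ)..1, f s * g s) = 0) := by
  have hIcc : uIcc (0:ℝ) 1 = Icc 0 1 := uIcc_of_le zero_le_one
  have hφd_nonneg : ∀ s ∈ uIcc (0:ℝ) 1, 0 ≤ φd s := fun s hs => (hφpos s (hIcc ▸ hs)).le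
  have hφd_int : IntervalIntegrable φd volume 0 1 := (hIcc ▸ hφc).intervalIntegrable
  have hcos_int : IntervalIntegrable (fun s => φd s * Real.cos (θ s)) volume 0 1 :=
    intervalIntegrable_mul_of_continuousOn_of_norm_le (hIcc ▸ hφc)
      (Real.measurable_cos.comp hθ) fun s => Real.abs_cos_le_one _
  have hmass : ∫ s in (0:ℝ)..1, φd s = 1 := by
    rw [integral_eq_sub_of_hasDerivWithinAt_Icc zero_le_one hφ hφc, hφ1, hφ0, sub_zero]
  have hf2 : ∫ s in (0:ℝ)..1, f s ^ 2 = (∫ s in (0:ℝ)..1, φd s) + ∫ s in (0:ℝ)..1, φd s * Real.cos (θ s) := by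
    rw [← intervalIntegral.integral_add hφd_int hcos_int]
    refine intervalIntegral.integral_congr fun s hs => ?_
    simp only [hf, Real.sq_sqrt_two_mul_mul_cos_half (hφd_nonneg s hs)]
  have hg2 : ∫ s in (0:ℝ)..1, g s ^ 2 = (∫ s in (0:ℝ)..1, φd s) - ∫ s in (0:ℝ)..1, φd s * Real.cos (θ s) := by
    rw [← intervalIntegral.integral_sub hφd_int hcos_int]
    refine intervalIntegral.integral_congr fun s hs => ?_
    simp only [hg, Real.sq_sqrt_two_mul_mul_sin_half (hφd_nonneg s hs)]
  have hfg : ∫ s in (0:ℝ)..1, f s * g s = ∫ s in (0:ℝ)..1, φd s * Real.sin (θ s) :=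
    intervalIntegral.integral_congr fun s hs => by
      simp only [hf, hg,
        Real.sqrt_two_mul_mul_cos_half_mul_sqrt_two_mul_mul_sin_half (hφd_nonneg s hs)]
  rw [hf2, hg2, hfg, hmass]
  constructor
  · rintro ⟨hcos, hsin⟩
    exact ⟨by linarith, by linarith, hsin⟩
  · rintro ⟨hcos, -, hsin⟩
    exact ⟨by linarith, hsin⟩
end
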